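/- arXiv:1401.6936 — 3 statements merged into one kernel-verified Lean document; each statement's English description precedes it below -/
import Mathlib

section
/- Let H be a finite graph with Γ(H) = k, where k ≥ 1. Then for every finite graph G, Γ(G[H]) = Γ(G[K_k]), where K_k is the complete graph on k vertices. -/
open SimpleGraph

/-- A greedy `k`-coloring of `G`: a partition of the vertex set into nonempty stable sets
`S 0, …, S (k-1)` such that for all `j < i`, every vertex of `S i` has a neighbor in `S j`. -/
def IsGreedyColoring {V : Type*} (G : SimpleGraph V) (k : ℕ) (S : Fin k → Set V) : Prop :=
  (∀ v : V, ∃! i, v ∈ S i) ∧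
  (∀ i, (S i).Nonempty) ∧
  (∀ i, ∀ v ∈ S i, ∀ w ∈ S i, ¬ G.Adj v w) ∧
  (∀ i j : Fin k, j < i → ∀ v ∈ S i, ∃ w ∈ S j, G.Adj v w)

/-- The Grundy number `Γ(G)`: the largest `k` such that `G` has a greedy `k`-coloring. -/
noncomputable def grundy {V : Type*} [Fintype V] (G : SimpleGraph V) : ℕ :=
  sSup {k | ∃ S : Fin k → Set V, IsGreedyColoring G k S}

/-- Lexicographic product `G[H]`: `(a,x)` adjacent to `(b,y)` iff `ab ∈ E(G)`,
or `a = b` and `xy ∈ E(H)`. -/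
def lexProd {α β : Type*} (G : SimpleGraph α) (H : SimpleGraph β) :
    SimpleGraph (α × β) where
  Adj x y := G.Adj x.1 y.1 ∨ (x.1 = y.1 ∧ H.Adj x.2 y.2)
  symm := ⟨fun _ _ h => by
    rcases h with h | ⟨h1, h2⟩
    · exact Or.inl (G.symm.symm _ _ h)
    · exact Or.inr ⟨h1.symm, H.symm.symm _ _ h2⟩⟩
  loopless := ⟨fun _ h => by
    rcases h with h | ⟨-, h2⟩
    · exact G.loopless.irrefl _ h
    · exact H.loopless.irrefl _ h2⟩

/-!
Record a greedy coloring of `G[H]` by the set `C a` of colors it uses on each copy `{a} × H`.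
Adjacent copies use disjoint sets, and every color of `C a` sees each smaller color in `C a` or
in `C b` for a neighbour `b`. Renumbered, the colors on one copy form a greedy coloring of `H`, so
`|C a| ≤ Γ(H)`. Such a family can be enlarged until every `|C a|` equals `k`: add to a deficient
`C a` the least color that is absent from `C a` and from its neighbours. Conversely, once every
`|C a| = k`, a greedy `k`-coloring `c` of `H'` gives a greedy coloring of `G[H']` with all the
colors of the family: color `(a, y)` by the `c y`-th element of `C a`. Applied between `H` and `K_k` in
both directions, this proves the equality.
-/

open Finset Function

/-- A Grundy labeling `f : V → Fin k` that is surjective is exactly a greedy `k`-coloring,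
with the fibres of `f` as color classes (`IsGrundyLabeling.isGreedyColoring`). -/
structure IsGrundyLabeling {V ι : Type*} [LT ι] (G : SimpleGraph V) (f : V → ι) : Prop where
  ne_of_adj : ∀ ⦃v w⦄, G.Adj v w → f v ≠ f w
  exists_adj_eq : ∀ v j, j < f v → ∃ w, G.Adj v w ∧ f w = j

section GrundyLabeling

variable {V ι κ : Type*} {G : SimpleGraph V}

theorem isGrundyLabeling_top_id [Preorder ι] : IsGrundyLabeling (⊤ : SimpleGraph ι) id :=
  ⟨fun _ _ h => h, fun _ j hj => ⟨j, hj.ne', rfl⟩⟩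

namespace IsGrundyLabeling

theorem isGreedyColoring {k : ℕ} {f : V → Fin k} (hf : IsGrundyLabeling G f)
    (hs : Surjective f) : IsGreedyColoring G k (fun i => {v | f v = i}) := by
  refine ⟨fun v => ⟨f v, rfl, fun _ h => h.symm⟩, hs, ?_, ?_⟩
  · rintro i v rfl w hw hvw
    exact hf.ne_of_adj hvw hw.symm
  · rintro i j hji v rfl
    obtain ⟨w, hvw, rfl⟩ := hf.exists_adj_eq v j hji
    exact ⟨w, rfl, hvw⟩

theorem comp_orderIso [Preorder ι] [Preorder κ] {f : V → ι} (hf : IsGrundyLabeling G f)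
    (e : ι ≃o κ) : IsGrundyLabeling G (e ∘ f) := by
  refine ⟨fun v w h => e.injective.ne (hf.ne_of_adj h), fun v j hj => ?_⟩
  obtain ⟨w, hvw, hw⟩ := hf.exists_adj_eq v (e.symm j) (by simpa using e.symm.lt_iff_lt.2 hj)
  exact ⟨w, hvw, by simp [hw]⟩

theorem codRestrict [Preorder ι] {f : V → ι} (hf : IsGrundyLabeling G f) (s : Set ι)
    (h : ∀ v, f v ∈ s) : IsGrundyLabeling G (Set.codRestrict f s h) := by
  refine ⟨fun v w hvw heq => hf.ne_of_adj hvw (congrArg Subtype.val heq), fun v j hj => ?_⟩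
  obtain ⟨w, hvw, hw⟩ := hf.exists_adj_eq v j hj
  exact ⟨w, hvw, Subtype.ext hw⟩

theorem fin_val {k : ℕ} {f : V → Fin k} (hf : IsGrundyLabeling G f) :
    IsGrundyLabeling G (fun v => (f v : ℕ)) := by
  refine ⟨fun v w hvw heq => hf.ne_of_adj hvw (Fin.ext heq), fun v j hj => ?_⟩
  obtain ⟨w, hvw, hw⟩ := hf.exists_adj_eq v ⟨j, hj.trans (f v).2⟩ hj
  exact ⟨w, hvw, by simp [hw]⟩

end IsGrundyLabeling

theorem IsGreedyColoring.exists_isGrundyLabeling {k : ℕ} {S : Fin k → Set V}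
    (h : IsGreedyColoring G k S) : ∃ f : V → Fin k, IsGrundyLabeling G f ∧ Surjective f := by
  choose f hf hf_uniq using h.1
  refine ⟨f, ⟨fun v w hvw heq => h.2.2.1 (f v) v (hf v) w (heq ▸ hf w) hvw, fun v j hj => ?_⟩,
    fun i => ?_⟩
  · obtain ⟨w, hw, hvw⟩ := h.2.2.2 (f v) j hj v (hf v)
    exact ⟨w, hvw, (hf_uniq w j hw).symm⟩
  · obtain ⟨v, hv⟩ := h.2.1 i
    exact ⟨v, (hf_uniq v i hv).symm⟩

variable [Fintype V]

theorem IsGreedyColoring.le_card {k : ℕ} {S : Fin k → Set V} (h : IsGreedyColoring G k S) :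
    k ≤ Fintype.card V := by
  obtain ⟨f, -, hs⟩ := h.exists_isGrundyLabeling
  simpa using Fintype.card_le_of_surjective f hs

theorem le_grundy {k : ℕ} {S : Fin k → Set V} (h : IsGreedyColoring G k S) : k ≤ grundy G :=
  le_csSup ⟨Fintype.card V, fun _ ⟨_, hS⟩ => hS.le_card⟩ ⟨S, h⟩

theorem grundy_le_card (G : SimpleGraph V) : grundy G ≤ Fintype.card V :=
  csSup_le' fun _ ⟨_, hS⟩ => hS.le_card

theorem exists_isGrundyLabeling_of_grundy_pos (h : 0 < grundy G) :
    ∃ f : V → Fin (grundy G), IsGrundyLabeling G f ∧ Surjective f := by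
  have hne : {k | ∃ S : Fin k → Set V, IsGreedyColoring G k S}.Nonempty := by
    by_contra hemp
    rw [Set.not_nonempty_iff_eq_empty] at hemp
    simp [grundy, hemp] at h
  obtain ⟨S, hS⟩ := Nat.sSup_mem hne ⟨Fintype.card V, fun _ ⟨_, hS⟩ => hS.le_card⟩
  exact hS.exists_isGrundyLabeling

theorem IsGrundyLabeling.card_le_grundy [Fintype ι] [LinearOrder ι] {f : V → ι}
    (hf : IsGrundyLabeling G f) (hs : Surjective f) : Fintype.card ι ≤ grundy G := by
  let e := Fintype.orderIsoFinOfCardEq ι rfl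
  exact le_grundy ((hf.comp_orderIso e.symm).isGreedyColoring (e.symm.surjective.comp hs))

theorem IsGrundyLabeling.card_image_le_grundy {f : V → ℕ} (hf : IsGrundyLabeling G f) :
    #(univ.image f) ≤ grundy G := by
  have h : ∀ v, f v ∈ (univ.image f : Set ℕ) := fun v => by simp
  have hs : Surjective (Set.codRestrict f _ h) := fun ⟨_, hj⟩ => by
    obtain ⟨v, -, rfl⟩ := Finset.mem_image.1 hj
    exact ⟨v, rfl⟩
  exact (Fintype.card_coe _).ge.trans ((hf.codRestrict _ h).card_le_grundy hs)

end GrundyLabeling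

/-- The shadow on `G` of a Grundy labeling of `G[H]`: `C a` is the set of colors used on the
copy `{a} × H` (`IsGrundyLabeling.isGrundySetLabeling_image_fiber`). -/
structure IsGrundySetLabeling {α : Type*} (G : SimpleGraph α) (C : α → Finset ℕ) : Prop where
  disjoint_of_adj : ∀ ⦃a b⦄, G.Adj a b → Disjoint (C a) (C b)
  mem_or_exists_adj_mem : ∀ a, ∀ i ∈ C a, ∀ j < i, j ∈ C a ∨ ∃ b, G.Adj a b ∧ j ∈ C b

theorem subset_update_insert {α β : Type*} [DecidableEq α] [DecidableEq β] {C : α → Finset β}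
    {a : α} {t : β} (b : α) : C b ⊆ update C a (insert t (C a)) b := by
  rcases eq_or_ne b a with rfl | hb
  · simp
  · simp [hb]

namespace IsGrundySetLabeling

variable {α : Type*} {G : SimpleGraph α}

theorem update_insert [DecidableEq α] {C : α → Finset ℕ} (hC : IsGrundySetLabeling G C)
    {a : α} {t : ℕ} (ht_adj : ∀ b, G.Adj a b → t ∉ C b)
    (ht_lt : ∀ j < t, j ∈ C a ∨ ∃ b, G.Adj a b ∧ j ∈ C b) :
    IsGrundySetLabeling G (update C a (insert t (C a))) := by
  set C' := update C a (insert t (C a))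
  have hCC' : ∀ b, C b ⊆ C' b := subset_update_insert
  have lift : ∀ {b j}, (j ∈ C b ∨ ∃ c, G.Adj b c ∧ j ∈ C c) →
      j ∈ C' b ∨ ∃ c, G.Adj b c ∧ j ∈ C' c := by
    rintro b j (hj | ⟨c, hbc, hj⟩)
    exacts [Or.inl (hCC' b hj), Or.inr ⟨c, hbc, hCC' c hj⟩]
  constructor
  · have key : ∀ {b c}, G.Adj b c → b ≠ a → c = a → Disjoint (C' b) (C' c) := by
      rintro b c hbc hb rfl
      simpa [C', hb, disjoint_insert_right] using
        ⟨ht_adj b hbc.symm, (hC.disjoint_of_adj hbc)⟩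
    intro b c hbc
    rcases eq_or_ne b a with rfl | hb
    · exact (key hbc.symm hbc.ne.symm rfl).symm
    rcases eq_or_ne c a with rfl | hc
    · exact key hbc hb rfl
    simpa [C', hb, hc] using hC.disjoint_of_adj hbc
  · intro b i hi j hji
    rcases eq_or_ne b a with rfl | hb
    · rcases mem_insert.1 (by simpa [C'] using hi) with rfl | hi
      exacts [lift (ht_lt j hji), lift (hC.mem_or_exists_adj_mem b i hi j hji)]
    · exact lift (hC.mem_or_exists_adj_mem b i (by simpa [C', hb] using hi) j hji)

theorem exists_update_insert [Fintype α] [DecidableEq α] {C : α → Finset ℕ}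
    (hC : IsGrundySetLabeling G C) (a : α) :
    ∃ t ∉ C a, IsGrundySetLabeling G (update C a (insert t (C a))) := by
  classical
  have hfree : ∃ t, t ∉ C a ∧ ∀ b, G.Adj a b → t ∉ C b := by
    obtain ⟨t, ht⟩ := Infinite.exists_notMem_finset (univ.biUnion C)
    simp only [mem_biUnion, mem_univ, true_and, not_exists] at ht
    exact ⟨t, ht a, fun b _ => ht b⟩
  refine ⟨Nat.find hfree, (Nat.find_spec hfree).1, hC.update_insert (Nat.find_spec hfree).2
    fun j hj => ?_⟩
  by_contra! hj_free
  exact Nat.find_min hfree hj hj_free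

theorem exists_card_eq [Fintype α] [DecidableEq α] {C : α → Finset ℕ}
    (hC : IsGrundySetLabeling G C) {k : ℕ} (hk : ∀ a, #(C a) ≤ k) :
    ∃ C', IsGrundySetLabeling G C' ∧ (∀ a, C a ⊆ C' a) ∧ ∀ a, #(C' a) = k := by
  by_cases hall : ∀ a, #(C a) = k
  · exact ⟨C, hC, fun _ => subset_rfl, hall⟩
  obtain ⟨a, ha⟩ : ∃ a, #(C a) < k := by
    push Not at hall
    obtain ⟨a, ha⟩ := hall
    exact ⟨a, (hk a).lt_of_ne ha⟩
  obtain ⟨t, ht, hC₁⟩ := hC.exists_update_insert a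
  have hcard_a : #(update C a (insert t (C a)) a) = #(C a) + 1 := by
    simp [card_insert_of_notMem ht]
  have hk₁ : ∀ b, #(update C a (insert t (C a)) b) ≤ k := fun b => by
    rcases eq_or_ne b a with rfl | hb
    · omega
    · simpa [hb] using hk b
  have hdec : ∑ b, (k - #(update C a (insert t (C a)) b)) < ∑ b, (k - #(C b)) :=
    sum_lt_sum (fun b _ => Nat.sub_le_sub_left (card_le_card (subset_update_insert b)) k)
      ⟨a, mem_univ a, by omega⟩
  obtain ⟨C', hC', hC₁C', hcard⟩ := exists_card_eq hC₁ hk₁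
  exact ⟨C', hC', fun b => (subset_update_insert b).trans (hC₁C' b), hcard⟩
termination_by ∑ a, (k - #(C a))
decreasing_by exact hdec

end IsGrundySetLabeling

theorem Finset.exists_orderEmbOfFin_eq {α : Type*} [LinearOrder α] {s : Finset α} {k : ℕ}
    (h : #s = k) {j : α} (hj : j ∈ s) : ∃ r, s.orderEmbOfFin h r = j := by
  rwa [← mem_coe, ← range_orderEmbOfFin s h] at hj

section LexProd

variable {α β : Type*} {G : SimpleGraph α} {H : SimpleGraph β}

namespace IsGrundyLabeling

variable [Fintype β] {f : α × β → ℕ}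

theorem isGrundySetLabeling_image_fiber (hf : IsGrundyLabeling (lexProd G H) f) :
    IsGrundySetLabeling G (fun a => univ.image fun x => f (a, x)) := by
  refine ⟨fun a b hab => disjoint_left.2 ?_, fun a i hi j hji => ?_⟩
  · simp only [mem_image, mem_univ, true_and]
    rintro _ ⟨x, rfl⟩ ⟨y, hy⟩
    exact hf.ne_of_adj (Or.inl hab : (lexProd G H).Adj (a, x) (b, y)) hy.symm
  · obtain ⟨x, -, rfl⟩ := mem_image.1 hi
    obtain ⟨⟨b, y⟩, hadj | ⟨rfl, -⟩, rfl⟩ := hf.exists_adj_eq (a, x) j hji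
    exacts [Or.inr ⟨b, hadj, mem_image_of_mem _ (mem_univ y)⟩,
      Or.inl (mem_image_of_mem _ (mem_univ y))]

theorem card_image_fiber_le_grundy (hf : IsGrundyLabeling (lexProd G H) f) (a : α) :
    #(univ.image fun x => f (a, x)) ≤ grundy H := by
  set s := univ.image fun x => f (a, x)
  let g : β → s := fun x => ⟨f (a, x), mem_image_of_mem _ (mem_univ x)⟩
  have hg : IsGrundyLabeling H g := by
    refine ⟨fun x y hxy heq => ?_, fun x j hj => ?_⟩
    · exact hf.ne_of_adj (show (lexProd G H).Adj (a, x) (a, y) from Or.inr ⟨rfl, hxy⟩)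
        (congrArg Subtype.val heq)
    obtain ⟨⟨b, y⟩, hadj | ⟨rfl, hxy⟩, hy⟩ := hf.exists_adj_eq (a, x) j hj
    · exact absurd (hy ▸ mem_image_of_mem _ (mem_univ y)) (disjoint_left.1
        (hf.isGrundySetLabeling_image_fiber.disjoint_of_adj hadj) j.2)
    · exact ⟨y, hxy, Subtype.ext hy⟩
  have hs : Surjective g := fun ⟨_, hj⟩ => by
    obtain ⟨x, -, rfl⟩ := mem_image.1 hj
    exact ⟨x, rfl⟩
  exact (Fintype.card_coe s).ge.trans (hg.card_le_grundy hs)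

end IsGrundyLabeling

theorem IsGrundySetLabeling.isGrundyLabeling_lexProd {C : α → Finset ℕ}
    (hC : IsGrundySetLabeling G C) {k : ℕ} (hcard : ∀ a, #(C a) = k) {g : β → Fin k}
    (hg : IsGrundyLabeling H g) (hs : Surjective g) :
    IsGrundyLabeling (lexProd G H) fun p => (C p.1).orderEmbOfFin (hcard p.1) (g p.2) := by
  set e := fun a => (C a).orderEmbOfFin (hcard a)
  have he_mem : ∀ a r, e a r ∈ C a := fun a r => orderEmbOfFin_mem _ _ r
  refine ⟨?_, fun ⟨a, x⟩ j hj => ?_⟩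
  · rintro ⟨a, x⟩ ⟨b, y⟩ (hab | ⟨rfl, hxy⟩) heq
    · exact disjoint_left.1 (hC.disjoint_of_adj hab) (he_mem a (g x)) (heq ▸ he_mem b (g y))
    · exact hg.ne_of_adj hxy ((e a).injective heq)
  obtain hja | ⟨b, hab, hjb⟩ := hC.mem_or_exists_adj_mem a _ (he_mem a (g x)) j hj
  · obtain ⟨r, rfl⟩ := exists_orderEmbOfFin_eq (hcard a) hja
    obtain ⟨y, hxy, rfl⟩ := hg.exists_adj_eq x r ((e a).lt_iff_lt.1 hj)
    exact ⟨(a, y), Or.inr ⟨rfl, hxy⟩, rfl⟩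
  · obtain ⟨r, rfl⟩ := exists_orderEmbOfFin_eq (hcard b) hjb
    obtain ⟨y, rfl⟩ := hs r
    exact ⟨(b, y), Or.inl hab, rfl⟩

end LexProd

theorem Finset.biUnion_image_fiber {α β γ : Type*} [Fintype α] [Fintype β] [DecidableEq γ]
    (f : α × β → γ) : (univ.biUnion fun a => univ.image fun x => f (a, x)) = univ.image f := by
  ext; simp

theorem Finset.image_fin_val_of_surjective {V : Type*} [Fintype V] {k : ℕ} {f : V → Fin k}
    (hf : Surjective f) : univ.image (fun v => (f v : ℕ)) = range k := by
  ext j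
  simp only [mem_image, mem_univ, true_and, mem_range]
  refine ⟨fun ⟨v, hv⟩ => hv ▸ (f v).2, fun hj => ?_⟩
  obtain ⟨v, hv⟩ := hf ⟨j, hj⟩
  exact ⟨v, by simp [hv]⟩

theorem grundy_lexProd_le_grundy_lexProd {α β γ : Type*} [Fintype α] [Fintype β] [Fintype γ]
    (G : SimpleGraph α) {H₁ : SimpleGraph β} {H₂ : SimpleGraph γ} {k : ℕ} (h₁ : grundy H₁ ≤ k)
    {g : γ → Fin k} (hg : IsGrundyLabeling H₂ g) (hs : Surjective g) :
    grundy (lexProd G H₁) ≤ grundy (lexProd G H₂) := by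
  classical
  obtain h0 | hpos := (grundy (lexProd G H₁)).eq_zero_or_pos
  · simp [h0]
  obtain ⟨f, hf, hf_surj⟩ := exists_isGrundyLabeling_of_grundy_pos hpos
  obtain ⟨C', hC', hCC', hcard⟩ := hf.fin_val.isGrundySetLabeling_image_fiber.exists_card_eq
    fun a => (hf.fin_val.card_image_fiber_le_grundy a).trans h₁
  have hf' := hC'.isGrundyLabeling_lexProd hcard hg hs
  calc grundy (lexProd G H₁)
      = #(univ.biUnion fun a => univ.image fun x => (f (a, x) : ℕ)) := by
        rw [biUnion_image_fiber fun v => (f v : ℕ), image_fin_val_of_surjective hf_surj,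
          card_range]
    _ ≤ #(univ.biUnion C') := card_le_card (biUnion_mono fun a _ => hCC' a)
    _ ≤ #(univ.image fun p : α × γ => (C' p.1).orderEmbOfFin (hcard p.1) (g p.2)) := by
        refine card_le_card fun j hj => ?_
        obtain ⟨a, -, hja⟩ := mem_biUnion.1 hj
        obtain ⟨r, rfl⟩ := exists_orderEmbOfFin_eq (hcard a) hja
        obtain ⟨y, rfl⟩ := hs r
        exact mem_image.2 ⟨(a, y), mem_univ _, rfl⟩
    _ ≤ grundy (lexProd G H₂) := hf'.card_image_le_grundy

theorem grundy_lexProd_eq_grundy_lexProd_top {α β : Type*} [Fintype α] [Fintype β]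
    (G : SimpleGraph α) (H : SimpleGraph β) :
    grundy (lexProd G H) = grundy (lexProd G (⊤ : SimpleGraph (Fin (grundy H)))) := by
  refine le_antisymm
    (grundy_lexProd_le_grundy_lexProd G le_rfl isGrundyLabeling_top_id surjective_id) ?_
  obtain h0 | hpos := (grundy H).eq_zero_or_pos
  · -- `G[K₀]` has no vertices
    have := grundy_le_card (lexProd G (⊤ : SimpleGraph (Fin (grundy H))))
    simp only [Fintype.card_prod, Fintype.card_fin, h0, mul_zero] at this
    omega
  obtain ⟨g, hg, hs⟩ := exists_isGrundyLabeling_of_grundy_pos hpos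
  exact grundy_lexProd_le_grundy_lexProd G ((grundy_le_card _).trans (Fintype.card_fin _).le)
    hg hs

theorem grundy_lexProd_eq_lexProd_complete_general {β : Type*} [Fintype β]
    (H : SimpleGraph β) (k : ℕ) (hH : grundy H = k)
    {α : Type*} [Fintype α] (G : SimpleGraph α) :
    grundy (lexProd G H) = grundy (lexProd G (⊤ : SimpleGraph (Fin k))) := by
  subst hH
  exact grundy_lexProd_eq_grundy_lexProd_top G H

/-- If `Γ(H) = k ≥ 1`, then for every finite graph `G`, `Γ(G[H]) = Γ(G[K_k])`. -/
theorem grundy_lexProd_eq_lexProd_complete {β : Type*} [Fintype β]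
    (H : SimpleGraph β) (k : ℕ) (hk : 1 ≤ k) (hH : grundy H = k)
    {α : Type*} [Fintype α] (G : SimpleGraph α) :
    grundy (lexProd G H) = grundy (lexProd G (⊤ : SimpleGraph (Fin k))) :=
  grundy_lexProd_eq_lexProd_complete_general H k hH G
end

section
/- Let k and n be positive integers. Then Γ(K_n □ K_k[S_n]) = n · k, where K_k[S_n] denotes the complete multipartite graph with k parts each of size n (i.e., the lexicographic product of the complete graph K_k with the edgeless graph S_n on n vertices). -/
/-!
A vertex in the `i`-th class of a greedy colouring has a neighbour in each of the `i`
earlier classes, so `i ≤ deg v`; as `K_n □ K_k[S_n]` is `(nk - 1)`-regular, `Γ ≤ nk`.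
Conversely, colour `(a, (b, c))` by `(a + c mod n, b)`. This is proper, and every vertex sees
all other `nk - 1` colours: change `a` to reach another residue in the same part `b`, or move
to another part `b'` choosing `c` freely. In such a colouring every ordering of the classes is
greedy.
-/

open SimpleGraph

namespace IsGreedyColoring

variable {V : Type*} {G : SimpleGraph V} {m : ℕ} {S : Fin m → Set V}

theorem eq_of_mem (hS : IsGreedyColoring G m S) {v : V} {i j : Fin m} (hi : v ∈ S i)
    (hj : v ∈ S j) : i = j :=
  (hS.1 v).unique hi hj

theorem le_degree (hS : IsGreedyColoring G m S) {i : Fin m} {v : V} (hv : v ∈ S i)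
    [Fintype (G.neighborSet v)] : (i : ℕ) ≤ G.degree v := by
  have hnbr (j : Fin i) : ∃ w : G.neighborSet v, (w : V) ∈ S ⟨j, j.2.trans i.2⟩ := by
    obtain ⟨w, hw, hadj⟩ := hS.2.2.2 i ⟨j, j.2.trans i.2⟩ j.2 v hv
    exact ⟨⟨w, hadj⟩, hw⟩
  choose w hw using hnbr
  have hinj : Function.Injective w := fun j j' h =>
    Fin.ext (Fin.mk.inj_iff.mp (hS.eq_of_mem (hw j) (h ▸ hw j')))
  have := Fintype.card_le_of_injective w hinj
  rwa [Fintype.card_fin, card_neighborSet_eq_degree] at this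

theorem le_of_forall_degree_lt [∀ v, Fintype (G.neighborSet v)] (hS : IsGreedyColoring G m S)
    {d : ℕ} (hd : ∀ v, G.degree v < d) : m ≤ d := by
  obtain _ | m := m
  · exact Nat.zero_le d
  obtain ⟨v, hv⟩ := hS.2.1 (Fin.last m)
  simpa using (hS.le_degree hv).trans_lt (hd v)

end IsGreedyColoring

theorem grundy_eq_of_forall_degree_lt {V : Type*} [Fintype V] {G : SimpleGraph V}
    [∀ v, Fintype (G.neighborSet v)] {d : ℕ} {S : Fin d → Set V} (hS : IsGreedyColoring G d S)
    (hd : ∀ v, G.degree v < d) : grundy G = d := by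
  have hub : d ∈ upperBounds {m | ∃ S : Fin m → Set V, IsGreedyColoring G m S} :=
    fun m ⟨_, hT⟩ => hT.le_of_forall_degree_lt hd
  exact le_antisymm (csSup_le' hub) (le_csSup ⟨d, hub⟩ ⟨S, hS⟩)

theorem SimpleGraph.Coloring.exists_isGreedyColoring {V α : Type*} [Fintype α]
    {G : SimpleGraph V} (C : G.Coloring α) (hsurj : Function.Surjective C)
    (hsees : ∀ v a, a ≠ C v → ∃ w, G.Adj v w ∧ C w = a) :
    ∃ S : Fin (Fintype.card α) → Set V, IsGreedyColoring G (Fintype.card α) S := by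
  let e := Fintype.equivFin α
  refine ⟨fun i => {v | e (C v) = i}, fun v => ⟨e (C v), rfl, fun i hi => hi.symm⟩,
    fun i => ?_, fun i v hv w hw hadj => C.valid hadj (e.injective (hv.trans hw.symm)),
    fun i j hji v hv => ?_⟩
  · obtain ⟨v, hv⟩ := hsurj (e.symm i)
    exact ⟨v, by simp [hv]⟩
  · have hv : e (C v) = i := hv
    obtain ⟨w, hadj, hw⟩ :=
      hsees v (e.symm j) fun h => hji.ne (by rw [← hv, ← h, e.apply_symm_apply])
    exact ⟨w, by simp [hw], hadj⟩

@[simp]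
theorem lexProd_adj {α β : Type*} {G : SimpleGraph α} {H : SimpleGraph β} {x y : α × β} :
    (lexProd G H).Adj x y ↔ G.Adj x.1 y.1 ∨ (x.1 = y.1 ∧ H.Adj x.2 y.2) :=
  Iff.rfl

instance {α β : Type*} (G : SimpleGraph α) (H : SimpleGraph β) [DecidableEq α]
    [DecidableRel G.Adj] [DecidableRel H.Adj] : DecidableRel (lexProd G H).Adj :=
  fun x y => inferInstanceAs (Decidable (G.Adj x.1 y.1 ∨ (x.1 = y.1 ∧ H.Adj x.2 y.2)))

theorem degree_lexProd {α β : Type*} [Fintype α] [Fintype β] [DecidableEq α]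
    (G : SimpleGraph α) (H : SimpleGraph β) [DecidableRel G.Adj] [DecidableRel H.Adj]
    (x : α × β) : (lexProd G H).degree x = G.degree x.1 * Fintype.card β + H.degree x.2 := by
  classical
  have hnbr : (lexProd G H).neighborFinset x =
      G.neighborFinset x.1 ×ˢ Finset.univ ∪ {x.1} ×ˢ H.neighborFinset x.2 := by
    ext ⟨a, b⟩
    simp [eq_comm, and_comm]
  have hdisj : Disjoint (G.neighborFinset x.1 ×ˢ (Finset.univ : Finset β))
      ({x.1} ×ˢ H.neighborFinset x.2) :=
    Finset.disjoint_product.mpr (Or.inl (G.neighborFinset_disjoint_singleton x.1))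
  rw [← card_neighborFinset_eq_degree, hnbr, Finset.card_union_of_disjoint hdisj]
  simp

/-- `K_n □ K_k[S_n]`. -/
abbrev boxProdCompleteMultipartite (n k : ℕ) : SimpleGraph (Fin n × Fin k × Fin n) :=
  (⊤ : SimpleGraph (Fin n)) □ lexProd (⊤ : SimpleGraph (Fin k)) (⊥ : SimpleGraph (Fin n))

namespace boxProdCompleteMultipartite

variable {n k : ℕ}

theorem degree_lt (v : Fin n × Fin k × Fin n) :
    (boxProdCompleteMultipartite n k).degree v < n * k := by
  have hn : 0 < n := Fin.pos v.1
  obtain ⟨k, rfl⟩ := Nat.exists_eq_add_one_of_ne_zero (Fin.pos v.2.1).ne'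
  rw [degree_boxProd, degree_lexProd]
  simp only [complete_graph_degree, bot_degree, Fintype.card_fin, Nat.add_sub_cancel]
  rw [mul_add_one, mul_comm k]
  omega

variable [NeZero n]

def coloring : (boxProdCompleteMultipartite n k).Coloring (Fin n × Fin k) :=
  Coloring.mk (fun v => (v.1 + v.2.2, v.2.1)) fun {v w} hadj heq => by
    simp only [boxProd_adj, top_adj, lexProd_adj, bot_adj] at hadj
    simp only [Prod.mk.injEq] at heq
    grind

@[simp]
theorem coloring_apply (v : Fin n × Fin k × Fin n) : coloring v = (v.1 + v.2.2, v.2.1) :=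
  rfl

theorem coloring_surjective : Function.Surjective (coloring (n := n) (k := k)) :=
  fun ⟨s, b⟩ => ⟨(s, b, 0), by simp⟩

theorem exists_adj_coloring_eq (v : Fin n × Fin k × Fin n) (c : Fin n × Fin k)
    (hc : c ≠ coloring v) :
    ∃ w, (boxProdCompleteMultipartite n k).Adj v w ∧ coloring w = c := by
  obtain ⟨a, b, t⟩ := v
  obtain ⟨s, b'⟩ := c
  simp only [coloring_apply, ne_eq, Prod.mk.injEq] at hc ⊢
  by_cases hb : b' = b
  · subst hb
    refine ⟨(s - t, b', t), ?_, by simp⟩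
    simp only [boxProd_adj, top_adj, lexProd_adj, bot_adj]
    grind
  · refine ⟨(a, b', s - a), ?_, by simp⟩
    simp only [boxProd_adj, top_adj, lexProd_adj, bot_adj]
    grind

end boxProdCompleteMultipartite

theorem grundy_boxProd_complete_multipartite_general (k n : ℕ) (hn : 1 ≤ n) :
    grundy ((⊤ : SimpleGraph (Fin n)).boxProd
      (lexProd (⊤ : SimpleGraph (Fin k)) (⊥ : SimpleGraph (Fin n)))) = n * k := by
  have : NeZero n := ⟨by omega⟩
  obtain ⟨S, hS⟩ :=
    (boxProdCompleteMultipartite.coloring (n := n) (k := k)).exists_isGreedyColoring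
      boxProdCompleteMultipartite.coloring_surjective
      boxProdCompleteMultipartite.exists_adj_coloring_eq
  have hcard : Fintype.card (Fin n × Fin k) = n * k := by simp
  rw [grundy_eq_of_forall_degree_lt hS, hcard]
  simpa only [hcard] using boxProdCompleteMultipartite.degree_lt

/-- For positive integers `k` and `n`, `Γ(K_n □ K_k[S_n]) = n · k`, where `K_k[S_n]`
is the complete multipartite graph with `k` parts of size `n`, realized as the
lexicographic product of `K_k` with the edgeless graph `S_n` on `n` vertices. -/
theorem grundy_boxProd_complete_multipartite (k n : ℕ) (hk : 1 ≤ k) (hn : 1 ≤ n) :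
    grundy ((⊤ : SimpleGraph (Fin n)).boxProd
      (lexProd (⊤ : SimpleGraph (Fin k)) (⊥ : SimpleGraph (Fin n)))) = n * k :=
  grundy_boxProd_complete_multipartite_general k n hn
end

section
/- Let G and H be finite graphs and let u and v be distinct vertices of G with N_G(u) = N_G(v) (the same open neighborhoods). Then Γ(G × H) = Γ((G − u) × H), where G − u is the induced subgraph of G obtained by deleting u. -/
open SimpleGraph

/-- Direct (tensor) product `G × H`: `(a,x)` adjacent to `(b,y)` iff
`ab ∈ E(G)` and `xy ∈ E(H)`. -/
def tensorProd {α β : Type*} (G : SimpleGraph α) (H : SimpleGraph β) :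
    SimpleGraph (α × β) where
  Adj x y := G.Adj x.1 y.1 ∧ H.Adj x.2 y.2
  symm := ⟨fun _ _ h => ⟨G.adj_symm h.1, H.adj_symm h.2⟩⟩
  loopless := ⟨fun _ h => G.loopless.irrefl _ h.1⟩

/-! Twins (vertices with the same open neighbourhood) always share their colour class in a
greedy colouring, since a neighbour of one in a lower class would be a neighbour of the other
there. Hence deleting `u` restricts greedy colourings of `G × H` to greedy colourings of
`(G − u) × H`, the copies `(u, x)` being represented by their twins `(v, x)`; conversely, pulling
a greedy colouring of `(G − u) × H` back along the retraction `u ↦ v` gives one of `G × H`. -/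

namespace IsGreedyColoring

variable {V W : Type*} {G : SimpleGraph V} {G' : SimpleGraph W} {k : ℕ}

theorem comap {S : Fin k → Set W} (hS : IsGreedyColoring G' k S) (f : G →g G')
    (hf : Function.Surjective f)
    (hlift : ∀ p w, G'.Adj (f p) w → ∃ q, f q = w ∧ G.Adj p q) :
    IsGreedyColoring G k (fun i => f ⁻¹' S i) := by
  obtain ⟨hpart, hne, hstab, hgreedy⟩ := hS
  refine ⟨fun p => hpart (f p), fun i => ?_,
    fun i p hp q hq hpq => hstab i _ hp _ hq (f.map_rel hpq), fun i j hij p hp => ?_⟩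
  · obtain ⟨w, hw⟩ := hne i
    obtain ⟨p, rfl⟩ := hf w
    exact ⟨p, hw⟩
  · obtain ⟨w, hw, hpw⟩ := hgreedy i j hij (f p) hp
    obtain ⟨q, rfl, hpq⟩ := hlift p w hpw
    exact ⟨q, hw, hpq⟩

theorem mem_of_neighborSet_eq {S : Fin k → Set V} (hS : IsGreedyColoring G k S) {p q : V}
    (hpq : G.neighborSet p = G.neighborSet q) {i : Fin k} (hp : p ∈ S i) : q ∈ S i := by
  obtain ⟨hpart, -, hstab, hgreedy⟩ := hS
  obtain ⟨j, hq, -⟩ := hpart q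
  rcases lt_trichotomy i j with hij | rfl | hji
  · obtain ⟨w, hw, hqw⟩ := hgreedy j i hij q hq
    exact absurd ((Set.ext_iff.mp hpq w).mpr hqw) (hstab i p hp w hw)
  · exact hq
  · obtain ⟨w, hw, hpw⟩ := hgreedy i j hji p hp
    exact absurd ((Set.ext_iff.mp hpq w).mp hpw) (hstab j q hq w hw)

theorem comap_embedding {S : Fin k → Set V} (hS : IsGreedyColoring G k S) (e : G' ↪g G)
    (htwin : ∀ p, ∃ q, G.neighborSet (e q) = G.neighborSet p) :
    IsGreedyColoring G' k (fun i => e ⁻¹' S i) := by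
  have ⟨hpart, hne, hstab, hgreedy⟩ := hS
  refine ⟨fun q => hpart (e q), fun i => ?_,
    fun i p hp q hq hpq => hstab i _ hp _ hq (e.map_adj_iff.mpr hpq), fun i j hij q hq => ?_⟩
  · obtain ⟨p, hp⟩ := hne i
    obtain ⟨q, hq⟩ := htwin p
    exact ⟨q, hS.mem_of_neighborSet_eq hq.symm hp⟩
  · obtain ⟨p, hp, hqp⟩ := hgreedy i j hij (e q) hq
    obtain ⟨q', hq'⟩ := htwin p
    have hqq' : G.Adj (e q') (e q) := (Set.ext_iff.mp hq' _).mpr hqp.symm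
    exact ⟨q', hS.mem_of_neighborSet_eq hq'.symm hp, e.map_adj_iff.mp hqq'.symm⟩

end IsGreedyColoring

section Retraction

variable {V W : Type*} [Fintype V] [Fintype W] {G : SimpleGraph V} {G' : SimpleGraph W}

theorem grundy_eq_of_twin_retraction (e : G' ↪g G) (r : V → W) (hr : ∀ w, r (e w) = w)
    (htwin : ∀ p, G.neighborSet (e (r p)) = G.neighborSet p) :
    grundy G = grundy G' := by
  have hadj : ∀ p q, G.Adj (e (r p)) q ↔ G.Adj p q := fun p q => Set.ext_iff.mp (htwin p) q
  let f : G →g G' :=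
    ⟨r, fun {p q} hpq => e.map_adj_iff.mp ((hadj q _).mpr ((hadj p q).mpr hpq).symm).symm⟩
  have hlift : ∀ p w, G'.Adj (f p) w → ∃ q, f q = w ∧ G.Adj p q :=
    fun p w hpw => ⟨e w, hr w, (hadj p _).mp (e.map_adj_iff.mpr hpw)⟩
  unfold grundy
  congr 1
  ext k
  exact ⟨fun ⟨_, hS⟩ => ⟨_, hS.comap_embedding e fun p => ⟨r p, htwin p⟩⟩,
    fun ⟨_, hS⟩ => ⟨_, hS.comap f (fun w => ⟨e w, hr w⟩) hlift⟩⟩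

end Retraction

section TensorProd

variable {α α' β : Type*} {G : SimpleGraph α} {G' : SimpleGraph α'} {H : SimpleGraph β}

def SimpleGraph.Embedding.tensorProdLeft (e : G' ↪g G) (H : SimpleGraph β) :
    tensorProd G' H ↪g tensorProd G H where
  toEmbedding := e.toEmbedding.prodMap (Function.Embedding.refl β)
  map_rel_iff' := and_congr_left fun _ => e.map_adj_iff

theorem tensorProd_neighborSet_eq {a b : α} (h : G.neighborSet a = G.neighborSet b) (x : β) :
    (tensorProd G H).neighborSet (a, x) = (tensorProd G H).neighborSet (b, x) := by
  ext ⟨c, y⟩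
  exact and_congr_left fun _ => Set.ext_iff.mp h c

end TensorProd

/-- If `u ≠ v` are vertices of `G` with the same open neighborhood, then
`Γ(G × H) = Γ((G − u) × H)`. -/
theorem grundy_tensorProd_deleteVertex {α β : Type*} [Fintype α] [Fintype β]
    [DecidableEq α] (G : SimpleGraph α) (H : SimpleGraph β) (u v : α)
    (huv : u ≠ v) (hN : G.neighborSet u = G.neighborSet v) :
    grundy (tensorProd G H) =
      grundy (tensorProd (G.induce {w : α | w ≠ u}) H) := by
  let r : α → {w : α | w ≠ u} := fun a => if h : a = u then ⟨v, huv.symm⟩ else ⟨a, h⟩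
  have hr : ∀ w : {w : α | w ≠ u}, r w = w := fun w => dif_neg w.2
  have htwin : ∀ a, G.neighborSet (r a) = G.neighborSet a := by
    intro a
    by_cases h : a = u
    · simp only [r, h, dif_pos, hN]
    · simp only [r, h, dif_neg, not_false_eq_true]
  exact grundy_eq_of_twin_retraction ((Embedding.induce _).tensorProdLeft H) (Prod.map r id)
    (fun p => Prod.ext (hr p.1) rfl) fun p => tensorProd_neighborSet_eq (htwin p.1) p.2
end
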